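/- arXiv:1805.02044 — 2 statements merged into one kernel-verified Lean document; each statement's English description precedes it below -/
import Mathlib

section
/- Let (Y,Z,X) be binary random variables with all conditional probabilities positive. Suppose Z is independent of X (P(Z=1|X=1) = P(Z=1|X=0)) and the interaction term vanishes, i.e., P(Y=1|Z=1,X=1)·P(Y=1|Z=0,X=0) = P(Y=1|Z=1,X=0)·P(Y=1|Z=0,X=1). Then the marginal relative risk equals the conditional relative risk: P(Y=1|X=1)/P(Y=1|X=0) = P(Y=1|X=1,Z=0)/P(Y=1|X=0,Z=0). -/
open MeasureTheory

variable {Ω : Type*} [MeasurableSpace Ω]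

/-- Event that binary variable `W` takes value `b`. -/
def ev (W : Ω → Bool) (b : Bool) : Set Ω := {ω | W ω = b}

/-- Probability of a set. -/
noncomputable def pr (μ : Measure Ω) (A : Set Ω) : ℝ := (μ A).toReal

/-- Conditional probability P(A | B). -/
noncomputable def cpr (μ : Measure Ω) (A B : Set Ω) : ℝ := pr μ (A ∩ B) / pr μ B

/-- P(Y = 1 | Z = z, X = x). -/
noncomputable def pY (μ : Measure Ω) (Y Z X : Ω → Bool) (z x : Bool) : ℝ :=
  cpr μ (ev Y true) (ev Z z ∩ ev X x)

/-- P(Y = 1 | X = x). -/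
noncomputable def pYm (μ : Measure Ω) (Y X : Ω → Bool) (x : Bool) : ℝ :=
  cpr μ (ev Y true) (ev X x)

/-- P(Y = 1 | Z = z). -/
noncomputable def pYz (μ : Measure Ω) (Y Z : Ω → Bool) (z : Bool) : ℝ :=
  cpr μ (ev Y true) (ev Z z)

/-- P(Z = 1 | X = x). -/
noncomputable def pZ (μ : Measure Ω) (Z X : Ω → Bool) (x : Bool) : ℝ :=
  cpr μ (ev Z true) (ev X x)

/-- P(Y^D = 1 | Z = z, X = x) for the product outcome over D. -/
noncomputable def pD {V : Type*} (μ : Measure Ω) (Y : V → Ω → Bool) (D : Finset V)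
    (Z X : Ω → Bool) (z x : Bool) : ℝ :=
  cpr μ {ω | ∀ v ∈ D, Y v ω = true} (ev Z z ∩ ev X x)

/-- P(Y^D = 1 | X = x) for the product outcome over D. -/
noncomputable def pDm {V : Type*} (μ : Measure Ω) (Y : V → Ω → Bool) (D : Finset V)
    (X : Ω → Bool) (x : Bool) : ℝ :=
  cpr μ {ω | ∀ v ∈ D, Y v ω = true} (ev X x)

/-- P(Z_U = i_U | X = x) for a family of intermediate variables. -/
noncomputable def pZU {U : Type*} (μ : Measure Ω) (Z : U → Ω → Bool) (X : Ω → Bool)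
    (i : U → Bool) (x : Bool) : ℝ :=
  cpr μ {ω | ∀ u, Z u ω = i u} (ev X x)

/-- P(Y^D = 1 | Z_U = i_U, X = x). -/
noncomputable def pDU {V U : Type*} (μ : Measure Ω) (Y : V → Ω → Bool) (D : Finset V)
    (Z : U → Ω → Bool) (X : Ω → Bool) (i : U → Bool) (x : Bool) : ℝ :=
  cpr μ {ω | ∀ v ∈ D, Y v ω = true} ({ω | ∀ u, Z u ω = i u} ∩ ev X x)


lemma pr_split (μ : Measure Ω) [IsProbabilityMeasure μ] (Z : Ω → Bool) (hZm : Measurable Z)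
    (A : Set Ω) (hA : MeasurableSet A) :
    pr μ A = pr μ (ev Z true ∩ A) + pr μ (ev Z false ∩ A) := by
  have hmf : MeasurableSet (ev Z false) := hZm (measurableSet_singleton false)
  have hu : (ev Z true ∩ A) ∪ (ev Z false ∩ A) = A := by
    ext ω
    simp only [ev, Set.mem_union, Set.mem_inter_iff, Set.mem_setOf_eq]
    cases h : Z ω <;> simp [h]
  have hd : Disjoint (ev Z true ∩ A) (ev Z false ∩ A) := by
    apply Set.disjoint_left.mpr
    rintro ω ⟨h1, -⟩ ⟨h2, -⟩
    simp only [ev, Set.mem_setOf_eq] at h1 h2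
    rw [h1] at h2; exact Bool.noConfusion h2
  unfold pr
  conv_lhs => rw [← hu]
  rw [measure_union hd (hmf.inter hA),
    ENNReal.toReal_add (measure_ne_top μ _) (measure_ne_top μ _)]

theorem stmt_4 (μ : Measure Ω) [IsProbabilityMeasure μ]
    (Y Z X : Ω → Bool) (hYm : Measurable Y) (hZm : Measurable Z) (hXm : Measurable X)
    (hXpos : ∀ x : Bool, 0 < pr μ (ev X x))
    (hZX : ∀ z x : Bool, 0 < pr μ (ev Z z ∩ ev X x))
    (hYpos : ∀ z x : Bool, 0 < pY μ Y Z X z x)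
    (hZ01 : ∀ x : Bool, 0 < pZ μ Z X x ∧ pZ μ Z X x < 1)
    (hZindX : pZ μ Z X true = pZ μ Z X false)
    (hnoint : pY μ Y Z X true true * pY μ Y Z X false false =
      pY μ Y Z X true false * pY μ Y Z X false true) :
    pYm μ Y X true / pYm μ Y X false =
      pY μ Y Z X false true / pY μ Y Z X false false := by

  have hYA : MeasurableSet (ev Y true) := hYm (measurableSet_singleton true)
  have hXA : ∀ x, MeasurableSet (ev X x) := fun x => hXm (measurableSet_singleton x)
  have key : ∀ x, pYm μ Y X x =
      pZ μ Z X x * pY μ Y Z X true x + (1 - pZ μ Z X x) * pY μ Y Z X false x := by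
    intro x
    have hsX : pr μ (ev X x) = pr μ (ev Z true ∩ ev X x) + pr μ (ev Z false ∩ ev X x) :=
      pr_split μ Z hZm _ (hXA x)
    have hsY : pr μ (ev Y true ∩ ev X x) =
        pr μ (ev Y true ∩ (ev Z true ∩ ev X x)) + pr μ (ev Y true ∩ (ev Z false ∩ ev X x)) := by
      rw [pr_split μ Z hZm _ (hYA.inter (hXA x)), Set.inter_left_comm,
        Set.inter_left_comm (ev Z false)]
    have hX := (hXpos x).ne'
    have ht := (hZX true x).ne'
    have hf := (hZX false x).ne'
    unfold pYm pY pZ cpr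
    rw [hsY, hsX]
    have hs : pr μ (ev Z true ∩ ev X x) + pr μ (ev Z false ∩ ev X x) ≠ 0 :=
      ne_of_gt (add_pos (hZX true x) (hZX false x))
    field_simp
    ring
  set p := pZ μ Z X false with hp
  set ytt := pY μ Y Z X true true
  set ytf := pY μ Y Z X true false
  set yft := pY μ Y Z X false true
  set yff := pY μ Y Z X false false
  have h1 := key true
  have h0 := key false
  rw [hZindX] at h1
  rw [h1, h0]
  have hp0 : 0 < p := (hZ01 false).1
  have hp1 : p < 1 := (hZ01 false).2
  have hytf : 0 < ytf := hYpos true false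
  have hyff : 0 < yff := hYpos false false
  have hden : 0 < p * ytf + (1 - p) * yff := by nlinarith
  rw [div_eq_div_iff hden.ne' hyff.ne']
  linear_combination p * hnoint
end

section
/- Let Y_V = (Y_v)_{v∈V} be a finite family of binary random variables and Z, X binary random variables, with P(Y_D = 1_D | Z=z, X=x) > 0 for every nonempty D ⊆ V and all z,x ∈ {0,1}, and 0 < P(Z=1|X=x) < 1. For each D ⊆ V define the product outcome Y^D = ∏_{v∈D} Y_v and the log-mean parameters θ_{D|X.Z} = log[P(Y^D=1|Z=0,X=1)/P(Y^D=1|Z=0,X=0)], θ_{D|Z.X} = log[P(Y^D=1|Z=1,X=0)/P(Y^D=1|Z=0,X=0)], θ_{D|ZX} = log of the interaction relative risk, θ_{D|X} = log[P(Y^D=1|X=1)/P(Y^D=1|X=0)], α_Z = log P(Z=1|X=0), θ_{Z|X} = log[P(Z=1|X=1)/P(Z=1|X=0)]. Then for every nonempty D ⊆ V, θ_{D|X} = θ_{D|X.Z} + λ_D, where λ_D = log{[exp(θ_{D|Z.X}+θ_{D|ZX})·exp(α_Z+θ_{Z|X}) + 1 − exp(α_Z+θ_{Z|X})]/[exp(θ_{D|Z.X})·exp(α_Z)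 + 1 − exp(α_Z)]}. -/
open MeasureTheory

variable {Ω : Type*} [MeasurableSpace Ω]

/-! By total probability over `Z`, `P(Y^D = 1 | X = x) = a_{0x} · (r_x · p_x + 1 - p_x)`, where
`a_{zx} = P(Y^D = 1 | Z = z, X = x)`, `p_x = P(Z = 1 | X = x)` and `r_x = a_{1x} / a_{0x}`. Taking the
ratio over `x` and logarithms splits off `log (a_{01} / a_{00}) = θ_{D|X.Z}`; in the remaining term the
exponentials of the log-mean parameters are exactly `r_1 = exp (θ_{D|Z.X} + θ_{D|ZX})`,
`r_0 = exp θ_{D|Z.X}`, `p_1 = exp (α_Z + θ_{Z|X})` and `p_0 = exp α_Z`. -/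

section ConditionalProbability

variable {μ : Measure Ω} [IsFiniteMeasure μ]

lemma cpr_inter_mul_cpr (A B C : Set Ω) :
    cpr μ A (C ∩ B) * cpr μ C B = cpr μ (A ∩ C) B := by
  simp only [cpr, pr, ← measureReal_def]
  rcases eq_or_ne (μ.real (C ∩ B)) 0 with hCB | hCB
  · have hACB : μ.real (A ∩ C ∩ B) = 0 :=
      measureReal_mono_null (Set.inter_subset_inter_left _ Set.inter_subset_right) hCB
    rw [hCB, hACB, div_zero, zero_mul, zero_div]
  · rw [Set.inter_assoc]
    field_simp

lemma cpr_eq_add_cpr_compl {C : Set Ω} (hC : MeasurableSet C) (A B : Set Ω) :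
    cpr μ A B = cpr μ A (C ∩ B) * cpr μ C B + cpr μ A (Cᶜ ∩ B) * cpr μ Cᶜ B := by
  rw [cpr_inter_mul_cpr, cpr_inter_mul_cpr, cpr, cpr, cpr, ← add_div]
  congr 1
  simp only [pr, ← measureReal_def]
  rw [← measureReal_inter_add_sdiff (s := A ∩ B) hC, Set.sdiff_eq, Set.inter_right_comm A B C,
    Set.inter_right_comm A B Cᶜ]

lemma cpr_compl {B C : Set Ω} (hC : MeasurableSet C) (hB : pr μ B ≠ 0) :
    cpr μ Cᶜ B = 1 - cpr μ C B := by
  rw [eq_sub_iff_add_eq, cpr, cpr, ← add_div, div_eq_one_iff_eq hB]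
  simp only [pr, ← measureReal_def]
  rw [Set.inter_comm, ← Set.sdiff_eq, Set.inter_comm, measureReal_sdiff_add_inter hC]

end ConditionalProbability

lemma ev_false_eq_compl {α : Type*} (W : α → Bool) : ev W false = (ev W true)ᶜ := by
  ext ω
  simp [ev]

lemma measurableSet_ev {W : Ω → Bool} (hW : Measurable W) (b : Bool) :
    MeasurableSet (ev W b) :=
  hW (measurableSet_singleton b)

lemma pDm_eq_mixture {V : Type*} {μ : Measure Ω} [IsFiniteMeasure μ] (Y : V → Ω → Bool)
    (D : Finset V) {Z : Ω → Bool} (X : Ω → Bool) (hZ : Measurable Z) {x : Bool}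
    (hx : pr μ (ev X x) ≠ 0) :
    pDm μ Y D X x =
      pD μ Y D Z X true x * pZ μ Z X x + pD μ Y D Z X false x * (1 - pZ μ Z X x) := by
  rw [pDm, cpr_eq_add_cpr_compl (measurableSet_ev hZ true), pZ,
    ← cpr_compl (measurableSet_ev hZ true) hx, ← ev_false_eq_compl]
  rfl

lemma log_div_mixture {a b c d p q : ℝ} (ha : 0 < a) (hb : 0 < b) (hc : 0 < c) (hd : 0 < d)
    (hp₀ : 0 ≤ p) (hp₁ : p ≤ 1) (hq₀ : 0 ≤ q) (hq₁ : q ≤ 1) :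
    Real.log ((a * p + b * (1 - p)) / (c * q + d * (1 - q))) =
      Real.log (b / d) + Real.log ((a / b * p + 1 - p) / (c / d * q + 1 - q)) := by
  have hmix : ∀ {r s : ℝ}, 0 < r → 0 ≤ s → s ≤ 1 → 0 < r * s + 1 - s := by
    intro r s hr hs₀ hs₁
    rcases hs₁.lt_or_eq with hs | rfl
    · nlinarith [mul_nonneg hr.le hs₀]
    · linarith
  have hnum : a * p + b * (1 - p) = b * (a / b * p + 1 - p) := by field_simp; ring
  have hden : c * q + d * (1 - q) = d * (c / d * q + 1 - q) := by field_simp; ring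
  rw [hnum, hden, mul_div_mul_comm, Real.log_mul (div_pos hb hd).ne'
    (div_pos (hmix (div_pos ha hb) hp₀ hp₁) (hmix (div_pos hc hd) hq₀ hq₁)).ne']

lemma log_mixture_ratio_eq {a : Bool → Bool → ℝ} {p : Bool → ℝ} (ha : ∀ z x, 0 < a z x)
    (hp : ∀ x, 0 < p x ∧ p x ≤ 1) :
    Real.log ((a true true * p true + a false true * (1 - p true)) /
        (a true false * p false + a false false * (1 - p false))) =
      Real.log (a false true / a false false) +
        Real.log
          ((Real.exp (Real.log (a true false / a false false) +
                Real.log ((a true true * a false false) / (a true false * a false true))) *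
              Real.exp (Real.log (p false) + Real.log (p true / p false)) +
              1 - Real.exp (Real.log (p false) + Real.log (p true / p false))) /
            (Real.exp (Real.log (a true false / a false false)) * Real.exp (Real.log (p false)) +
              1 - Real.exp (Real.log (p false)))) := by
  have ha' : ∀ z x, a z x ≠ 0 := fun z x ↦ (ha z x).ne'
  have hp' : ∀ x, p x ≠ 0 := fun x ↦ (hp x).1.ne'
  have hratio : Real.exp (Real.log (a true false / a false false) +
      Real.log ((a true true * a false false) / (a true false * a false true))) =
      a true true / a false true := by
    rw [Real.exp_add, Real.exp_log (div_pos (ha _ _) (ha _ _)),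
      Real.exp_log (div_pos (mul_pos (ha _ _) (ha _ _)) (mul_pos (ha _ _) (ha _ _)))]
    field_simp [ha']
  have hprob : Real.exp (Real.log (p false) + Real.log (p true / p false)) = p true := by
    rw [Real.exp_add, Real.exp_log (hp false).1, Real.exp_log (div_pos (hp true).1 (hp false).1)]
    field_simp [hp']
  rw [hratio, hprob, Real.exp_log (div_pos (ha _ _) (ha _ _)), Real.exp_log (hp false).1]
  exact log_div_mixture (ha _ _) (ha _ _) (ha _ _) (ha _ _) (hp true).1.le (hp true).2
    (hp false).1.le (hp false).2

theorem stmt_8_general {V : Type*} (μ : Measure Ω) [IsProbabilityMeasure μ]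
    (Y : V → Ω → Bool) (Z X : Ω → Bool)
    (hZm : Measurable Z)
    (hDpos : ∀ (D : Finset V) (z x : Bool), D.Nonempty → 0 < pD μ Y D Z X z x)
    (hZ01 : ∀ x : Bool, 0 < pZ μ Z X x ∧ pZ μ Z X x < 1) :
    ∀ D : Finset V, D.Nonempty →
      Real.log (pDm μ Y D X true / pDm μ Y D X false) =
        Real.log (pD μ Y D Z X false true / pD μ Y D Z X false false) +
          Real.log
            ((Real.exp (Real.log (pD μ Y D Z X true false / pD μ Y D Z X false false) +
                  Real.log ((pD μ Y D Z X true true * pD μ Y D Z X false false) /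
                    (pD μ Y D Z X true false * pD μ Y D Z X false true))) *
                Real.exp (Real.log (pZ μ Z X false) +
                  Real.log (pZ μ Z X true / pZ μ Z X false)) +
                1 - Real.exp (Real.log (pZ μ Z X false) +
                  Real.log (pZ μ Z X true / pZ μ Z X false))) /
              (Real.exp (Real.log (pD μ Y D Z X true false / pD μ Y D Z X false false)) *
                  Real.exp (Real.log (pZ μ Z X false)) +
                1 - Real.exp (Real.log (pZ μ Z X false)))) := by
  intro D hD
  have hX : ∀ x : Bool, pr μ (ev X x) ≠ 0 := fun x hx ↦
    (hZ01 x).1.ne' (by rw [pZ, cpr, hx, div_zero])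
  rw [pDm_eq_mixture Y D X hZm (hX true), pDm_eq_mixture Y D X hZm (hX false)]
  exact log_mixture_ratio_eq (a := pD μ Y D Z X) (fun z x ↦ hDpos D z x hD)
    fun x ↦ ⟨(hZ01 x).1, (hZ01 x).2.le⟩

theorem stmt_8 {V : Type*} (μ : Measure Ω) [IsProbabilityMeasure μ]
    (Y : V → Ω → Bool) (Z X : Ω → Bool)
    (hYm : ∀ v, Measurable (Y v)) (hZm : Measurable Z) (hXm : Measurable X)
    (hXpos : ∀ x : Bool, 0 < pr μ (ev X x))
    (hZX : ∀ z x : Bool, 0 < pr μ (ev Z z ∩ ev X x))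
    (hDpos : ∀ (D : Finset V) (z x : Bool), D.Nonempty → 0 < pD μ Y D Z X z x)
    (hZ01 : ∀ x : Bool, 0 < pZ μ Z X x ∧ pZ μ Z X x < 1) :
    ∀ D : Finset V, D.Nonempty →
      Real.log (pDm μ Y D X true / pDm μ Y D X false) =
        Real.log (pD μ Y D Z X false true / pD μ Y D Z X false false) +
          Real.log
            ((Real.exp (Real.log (pD μ Y D Z X true false / pD μ Y D Z X false false) +
                  Real.log ((pD μ Y D Z X true true * pD μ Y D Z X false false) /
                    (pD μ Y D Z X true false * pD μ Y D Z X false true))) *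
                Real.exp (Real.log (pZ μ Z X false) +
                  Real.log (pZ μ Z X true / pZ μ Z X false)) +
                1 - Real.exp (Real.log (pZ μ Z X false) +
                  Real.log (pZ μ Z X true / pZ μ Z X false))) /
              (Real.exp (Real.log (pD μ Y D Z X true false / pD μ Y D Z X false false)) *
                  Real.exp (Real.log (pZ μ Z X false)) +
                1 - Real.exp (Real.log (pZ μ Z X false)))) :=
  stmt_8_general μ Y Z X hZm hDpos hZ01
end
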